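/- If D₁, ..., D_m are nonempty generalized polyhedral convex sets in X, then the closure of D₁ + ⋯ + D_m is a generalized polyhedral convex set. -/

import Mathlib

/-!
Each generalized polyhedral convex set has the form `S '' Q + K` with `Q` a polyhedron in some
`ℝⁿ`, `S` linear and `K` a subspace, and sums of such sets are again of this form (take the
product polyhedron and the sum of the subspaces). If `L` is the closure of `K`, then
`closure (S '' Q + K)` is the preimage under `X → X ⧸ L` of the image of `Q`. By Fourier–Motzkin
elimination that image is a polyhedron in a finite-dimensional, hence closed, subspace of the
Hausdorff space `X ⧸ L`; Hahn–Banach extends the functionals cutting it out to all of `X`.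
-/

open Pointwise

/-- A generalized polyhedral convex set: the intersection of a closed affine
subspace with finitely many closed half-spaces given by continuous linear
functionals. -/
def IsGPCS {X : Type*} [AddCommGroup X] [Module ℝ X] [TopologicalSpace X]
    (D : Set X) : Prop :=
  ∃ (p : ℕ) (f : Fin p → (X →L[ℝ] ℝ)) (α : Fin p → ℝ)
    (x₀ : X) (W : Submodule ℝ X),
    IsClosed (x₀ +ᵥ (W : Set X)) ∧
    D = {x ∈ x₀ +ᵥ (W : Set X) | ∀ i, f i x ≤ α i}

/-- A polyhedral convex set: a finite intersection of closed half-spaces. -/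
def IsPCS {X : Type*} [AddCommGroup X] [Module ℝ X] [TopologicalSpace X]
    (D : Set X) : Prop :=
  ∃ (p : ℕ) (f : Fin p → (X →L[ℝ] ℝ)) (α : Fin p → ℝ),
    D = {x | ∀ i, f i x ≤ α i}

/-- `F` is a face of the convex set `C`. -/
def IsFaceOf {X : Type*} [AddCommGroup X] [Module ℝ X] (F C : Set X) : Prop :=
  Convex ℝ F ∧ F ⊆ C ∧
    ∀ ⦃x y : X⦄, x ∈ C → y ∈ C → ∀ t : ℝ, 0 < t → t < 1 →
      (1 - t) • x + t • y ∈ F → x ∈ F ∧ y ∈ F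

open Set

def IsPolyhedron {E : Type*} [AddCommGroup E] [Module ℝ E] (s : Set E) : Prop :=
  ∃ (ι : Type) (_ : Finite ι) (f : ι → E →ₗ[ℝ] ℝ) (α : ι → ℝ), s = {x | ∀ i, f i x ≤ α i}

section Polyhedron

variable {E F : Type*} [AddCommGroup E] [Module ℝ E] [AddCommGroup F] [Module ℝ F]

lemma IsPolyhedron.preimage {s : Set F} (hs : IsPolyhedron s) (A : E →ₗ[ℝ] F) :
    IsPolyhedron (A ⁻¹' s) := by
  obtain ⟨ι, _, f, α, rfl⟩ := hs
  exact ⟨ι, inferInstance, fun i => f i ∘ₗ A, α, rfl⟩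

lemma isPolyhedron_setOf_le (f : E →ₗ[ℝ] ℝ) (c : ℝ) : IsPolyhedron {x | f x ≤ c} :=
  ⟨Unit, inferInstance, fun _ => f, fun _ => c, by simp⟩

lemma IsPolyhedron.inter {s t : Set E} (hs : IsPolyhedron s) (ht : IsPolyhedron t) :
    IsPolyhedron (s ∩ t) := by
  obtain ⟨ι, _, f, α, rfl⟩ := hs
  obtain ⟨κ, _, g, β, rfl⟩ := ht
  exact ⟨ι ⊕ κ, inferInstance, Sum.elim f g, Sum.elim α β, by ext; simp [Sum.forall]⟩

lemma IsPolyhedron.prod {s : Set E} {t : Set F} (hs : IsPolyhedron s) (ht : IsPolyhedron t) :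
    IsPolyhedron (s ×ˢ t) :=
  (hs.preimage (LinearMap.fst ℝ E F)).inter (ht.preimage (LinearMap.snd ℝ E F))

lemma LinearMap.isPolyhedron_ker [FiniteDimensional ℝ F] (A : E →ₗ[ℝ] F) :
    IsPolyhedron (LinearMap.ker A : Set E) := by
  let b := Module.finBasis ℝ F
  refine ⟨Fin _ ⊕ Fin _, inferInstance, Sum.elim (fun k => b.coord k ∘ₗ A)
    (fun k => -(b.coord k ∘ₗ A)), 0, ?_⟩
  ext x
  simp [Sum.forall, ← forall_and, ← le_antisymm_iff, ← b.forall_coord_eq_zero_iff]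

lemma Submodule.isPolyhedron [FiniteDimensional ℝ E] (p : Submodule ℝ E) :
    IsPolyhedron (p : Set E) := by
  simpa using p.mkQ.isPolyhedron_ker

lemma exists_le_le_of_finite {l u : Set ℝ} (hl : l.Finite) (hu : u.Finite)
    (h : ∀ a ∈ l, ∀ b ∈ u, a ≤ b) : ∃ t, (∀ a ∈ l, a ≤ t) ∧ ∀ b ∈ u, t ≤ b := by
  rcases u.eq_empty_or_nonempty with rfl | hu₀
  · obtain ⟨t, ht⟩ := hl.bddAbove
    exact ⟨t, ht, by simp⟩
  · exact ⟨sInf u, fun a ha => le_csInf hu₀ (h a ha), fun b hb => csInf_le hu.bddBelow hb⟩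

lemma exists_forall_mul_le_iff {ι : Type*} [Finite ι] (c b : ι → ℝ) :
    (∃ t, ∀ i, c i * t ≤ b i) ↔
      (∀ i, c i = 0 → 0 ≤ b i) ∧ ∀ i j, 0 < c i → c j < 0 → c j * b i ≤ c i * b j := by
  constructor
  · rintro ⟨t, ht⟩
    refine ⟨fun i hi => by simpa [hi] using ht i, fun i j hi hj => ?_⟩
    nlinarith [ht i, ht j]
  · rintro ⟨hzero, hpair⟩
    obtain ⟨t, hlo, hup⟩ := exists_le_le_of_finite
      (l := (fun j => b j / c j) '' {j | c j < 0}) (u := (fun i => b i / c i) '' {i | 0 < c i})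
      (toFinite _) (toFinite _) (by
        rintro _ ⟨j, hj, rfl⟩ _ ⟨i, hi, rfl⟩
        rw [div_le_iff_of_neg hj, div_mul_eq_mul_div, div_le_iff₀ hi]
        linarith [hpair i j hi hj])
    refine ⟨t, fun i => ?_⟩
    rcases lt_trichotomy (c i) 0 with hi | hi | hi
    · have := hlo _ ⟨i, hi, rfl⟩
      rw [div_le_iff_of_neg hi] at this
      linarith
    · simpa [hi] using hzero i hi
    · have := hup _ ⟨i, hi, rfl⟩
      rw [le_div_iff₀ hi] at this
      linarith

/-- Fourier–Motzkin elimination of one real variable. -/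
lemma IsPolyhedron.image_snd {s : Set (ℝ × F)} (hs : IsPolyhedron s) :
    IsPolyhedron (Prod.snd '' s) := by
  classical
  obtain ⟨ι, _, f, α, rfl⟩ := hs
  set c : ι → ℝ := fun i => f i (1, 0)
  set g : ι → F →ₗ[ℝ] ℝ := fun i => f i ∘ₗ LinearMap.inr ℝ ℝ F
  have hf : ∀ i t y, f i (t, y) = c i * t + g i y := fun i t y => by
    rw [show (t, y) = t • ((1 : ℝ), (0 : F)) + (0, y) by simp, map_add, map_smul, smul_eq_mul,
      mul_comm]
    rfl
  refine ⟨{i // c i = 0} ⊕ {p : ι × ι // 0 < c p.1 ∧ c p.2 < 0}, inferInstance,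
    Sum.elim (fun i => g i) (fun p => c p.1.1 • g p.1.2 - c p.1.2 • g p.1.1),
    Sum.elim (fun i => α i) (fun p => c p.1.1 * α p.1.2 - c p.1.2 * α p.1.1), ?_⟩
  ext y
  have hsolve : y ∈ Prod.snd '' {x | ∀ i, f i x ≤ α i} ↔ ∃ t, ∀ i, c i * t ≤ α i - g i y := by
    simp only [mem_image, mem_ofPred_eq, Prod.exists, exists_eq_right, hf,
      le_sub_iff_add_le]
  rw [hsolve, exists_forall_mul_le_iff]
  simp only [mem_ofPred_eq, Sum.forall, Sum.elim_inl, Sum.elim_inr, Subtype.forall, Prod.forall,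
    LinearMap.sub_apply, LinearMap.smul_apply, smul_eq_mul, sub_nonneg, and_imp]
  refine and_congr Iff.rfl (forall₄_congr fun i j hi hj => ?_)
  constructor <;> intro h <;> linarith

lemma IsPolyhedron.image_snd_pi {n : ℕ} {s : Set ((Fin n → ℝ) × F)} (hs : IsPolyhedron s) :
    IsPolyhedron (Prod.snd '' s) := by
  induction n with
  | zero =>
    convert hs.preimage (LinearMap.inr ℝ (Fin 0 → ℝ) F) using 1
    ext y
    exact ⟨fun ⟨⟨x, _⟩, hx, hy⟩ => hy ▸ Subsingleton.elim x 0 ▸ hx, fun h => ⟨(0, y), h, rfl⟩⟩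
  | succ n ih =>
    let L : ℝ × ((Fin n → ℝ) × F) →ₗ[ℝ] (Fin (n + 1) → ℝ) × F :=
      ((Fin.consLinearEquiv ℝ fun _ => ℝ).prodCongr (LinearEquiv.refl ℝ F)).toLinearMap ∘ₗ
        (LinearEquiv.prodAssoc ℝ ℝ (Fin n → ℝ) F).symm.toLinearMap
    have hL : ∀ a x y, L (a, x, y) = (Fin.cons a x, y) := fun _ _ _ => rfl
    convert ih (hs.preimage L).image_snd using 1
    ext y
    simp only [mem_image, mem_preimage, Prod.exists, exists_eq_right, hL,
      Fin.exists_fin_succ_pi]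
    exact exists_comm

lemma IsPolyhedron.image [FiniteDimensional ℝ E] [FiniteDimensional ℝ F] {Q : Set E}
    (hQ : IsPolyhedron Q) (A : E →ₗ[ℝ] F) : IsPolyhedron (A '' Q) := by
  let e := (Module.finBasis ℝ E).equivFun.symm
  let graph : Set ((Fin _ → ℝ) × F) := Prod.fst ⁻¹' (e ⁻¹' Q) ∩
    LinearMap.ker (A ∘ₗ e.toLinearMap ∘ₗ LinearMap.fst ℝ _ F - LinearMap.snd ℝ _ F)
  have hgraph : A '' Q = Prod.snd '' graph := by
    ext y
    simp [graph, sub_eq_zero, e.surjective.exists]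
  rw [hgraph]
  exact ((hQ.preimage e.toLinearMap).preimage (LinearMap.fst ℝ _ F)).inter
    (LinearMap.isPolyhedron_ker _) |>.image_snd_pi

end Polyhedron

/-- `S '' Q` stands for the `conv {uᵢ} + cone {vⱼ}` part of the usual representation; the
subspace `K` need not be closed. -/
def IsPolyhedronImageAddSubmodule {X : Type*} [AddCommGroup X] [Module ℝ X] (C : Set X) : Prop :=
  ∃ (n : ℕ) (S : (Fin n → ℝ) →ₗ[ℝ] X) (Q : Set (Fin n → ℝ)) (K : Submodule ℝ X),
    IsPolyhedron Q ∧ C = S '' Q + (K : Set X)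

section PolyhedronImageAddSubmodule

variable {E X Y : Type*} [AddCommGroup E] [Module ℝ E] [AddCommGroup X] [Module ℝ X]
  [AddCommGroup Y] [Module ℝ Y]

lemma isPolyhedronImageAddSubmodule_image_add [FiniteDimensional ℝ E] (S : E →ₗ[ℝ] X)
    {Q : Set E} (hQ : IsPolyhedron Q) (K : Submodule ℝ X) :
    IsPolyhedronImageAddSubmodule (S '' Q + (K : Set X)) := by
  let e := (Module.finBasis ℝ E).equivFun.symm
  refine ⟨_, S ∘ₗ e.toLinearMap, e ⁻¹' Q, K, hQ.preimage e.toLinearMap, ?_⟩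
  rw [LinearMap.coe_comp, image_comp, LinearEquiv.coe_coe, image_preimage_eq _ e.surjective]

namespace IsPolyhedronImageAddSubmodule

lemma singleton (a : X) : IsPolyhedronImageAddSubmodule ({a} : Set X) := by
  have hone : IsPolyhedron ({1} : Set ℝ) := by
    convert (isPolyhedron_setOf_le LinearMap.id 1).inter
      (isPolyhedron_setOf_le (-LinearMap.id) (-1))
    ext; simp [le_antisymm_iff]
  convert isPolyhedronImageAddSubmodule_image_add (LinearMap.toSpanSingleton ℝ X a) hone ⊥
  simp

lemma zero : IsPolyhedronImageAddSubmodule (0 : Set X) :=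
  singleton_zero (α := X) ▸ singleton 0

lemma add {C D : Set X} (hC : IsPolyhedronImageAddSubmodule C)
    (hD : IsPolyhedronImageAddSubmodule D) : IsPolyhedronImageAddSubmodule (C + D) := by
  obtain ⟨n, S, Q, K, hQ, rfl⟩ := hC
  obtain ⟨n', S', Q', K', hQ', rfl⟩ := hD
  have hcoprod : S.coprod S' '' Q ×ˢ Q' = S '' Q + S' '' Q' := by
    ext; simp [mem_add, and_assoc]
  convert isPolyhedronImageAddSubmodule_image_add (S.coprod S') (hQ.prod hQ') (K ⊔ K') using 1
  rw [hcoprod, Submodule.coe_sup, add_add_add_comm]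

lemma image {C : Set X} (hC : IsPolyhedronImageAddSubmodule C) (g : X →ₗ[ℝ] Y) :
    IsPolyhedronImageAddSubmodule (g '' C) := by
  obtain ⟨n, S, Q, K, hQ, rfl⟩ := hC
  refine ⟨n, g ∘ₗ S, Q, K.map g, hQ, ?_⟩
  rw [image_add, ← image_comp, Submodule.map_coe, LinearMap.coe_comp]

end IsPolyhedronImageAddSubmodule

lemma LinearMap.isPolyhedronImageAddSubmodule_preimage [FiniteDimensional ℝ E]
    (φ : X →ₗ[ℝ] E) {P : Set E} (hP : IsPolyhedron P) :
    IsPolyhedronImageAddSubmodule (φ ⁻¹' P) := by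
  obtain ⟨σ, hσ⟩ := φ.rangeRestrict.exists_rightInverse_of_surjective φ.range_rangeRestrict
  obtain ⟨π, hπ⟩ := φ.range.subtype.exists_leftInverse_of_injective φ.range.ker_subtype
  set S := σ ∘ₗ π
  have hφS : ∀ y ∈ φ.range, φ (S y) = y := fun y hy => by
    have hπy : π y = ⟨y, hy⟩ := LinearMap.congr_fun hπ ⟨y, hy⟩
    simpa [S, hπy] using congrArg Subtype.val (LinearMap.congr_fun hσ (π y))
  have hpre : φ ⁻¹' P = S '' (P ∩ φ.range) + (LinearMap.ker φ : Set X) := by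
    ext x
    constructor
    · intro hx
      refine ⟨S (φ x), ⟨φ x, ⟨hx, φ.mem_range_self x⟩, rfl⟩, x - S (φ x), ?_, add_sub_cancel _ _⟩
      simp [hφS _ (φ.mem_range_self x)]
    · rintro ⟨_, ⟨y, ⟨hyP, hyR⟩, rfl⟩, k, hk, rfl⟩
      simpa [hφS y hyR, LinearMap.mem_ker.1 hk] using hyP
  rw [hpre]
  exact isPolyhedronImageAddSubmodule_image_add S (hP.inter (Submodule.isPolyhedron _)) _

end PolyhedronImageAddSubmodule

lemma IsGPCS.isPolyhedronImageAddSubmodule {X : Type*} [AddCommGroup X] [Module ℝ X]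
    [TopologicalSpace X] {D : Set X} (hD : IsGPCS D) : IsPolyhedronImageAddSubmodule D := by
  obtain ⟨p, f, α, x₀, W, -, rfl⟩ := hD
  let ψ : W →ₗ[ℝ] Fin p → ℝ := LinearMap.pi fun i => (f i : X →ₗ[ℝ] ℝ) ∘ₗ W.subtype
  let P : Set (Fin p → ℝ) := {y | ∀ i, y i ≤ α i - f i x₀}
  have hP : IsPolyhedron P := ⟨Fin p, inferInstance, LinearMap.proj, _, rfl⟩
  have hD : {x ∈ x₀ +ᵥ (W : Set X) | ∀ i, f i x ≤ α i} = {x₀} + W.subtype '' (ψ ⁻¹' P) := by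
    ext x
    simp [ψ, P, mem_vadd_set_iff_neg_vadd_mem, singleton_add, le_sub_iff_add_le', and_comm]
  rw [hD]
  exact (IsPolyhedronImageAddSubmodule.singleton x₀).add
    ((ψ.isPolyhedronImageAddSubmodule_preimage hP).image W.subtype)

section Topology

variable {X : Type*} [AddCommGroup X] [Module ℝ X] [TopologicalSpace X]

lemma IsGPCS.isClosed {D : Set X} (hD : IsGPCS D) : IsClosed D := by
  obtain ⟨p, f, α, x₀, W, hW, rfl⟩ := hD
  have hhalf : IsClosed {x | ∀ i, f i x ≤ α i} := by
    simpa only [ofPred_forall] using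
      isClosed_iInter fun i => isClosed_le (f i).continuous continuous_const
  exact hW.inter hhalf

lemma isGPCS_sep_forall_le {ι : Type*} [Finite ι] {W : Submodule ℝ X} (hW : IsClosed (W : Set X))
    (f : ι → X →L[ℝ] ℝ) (α : ι → ℝ) : IsGPCS {x ∈ (W : Set X) | ∀ i, f i x ≤ α i} := by
  let e := Finite.equivFin ι
  refine ⟨_, f ∘ e.symm, α ∘ e.symm, 0, W, by simpa using hW, ?_⟩
  ext x
  simp [e.symm.forall_congr_left]

lemma isGPCS_inter_preimage {F : Type*} [AddCommGroup F] [Module ℝ F] [TopologicalSpace F]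
    [IsTopologicalAddGroup F] [ContinuousSMul ℝ F] [T2Space F] [FiniteDimensional ℝ F]
    {W : Submodule ℝ X} (hW : IsClosed (W : Set X)) (ρ : X →L[ℝ] F) {P : Set F}
    (hP : IsPolyhedron P) : IsGPCS ((W : Set X) ∩ ρ ⁻¹' P) := by
  obtain ⟨ι, _, g, γ, rfl⟩ := hP
  exact isGPCS_sep_forall_le hW (fun i => (LinearMap.toContinuousLinearMap (g i)).comp ρ) γ

variable [IsTopologicalAddGroup X] [ContinuousSMul ℝ X] [LocallyConvexSpace ℝ X]

lemma isGPCS_preimage_image {E Y : Type*} [AddCommGroup E] [Module ℝ E] [FiniteDimensional ℝ E]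
    [AddCommGroup Y] [Module ℝ Y] [TopologicalSpace Y] [IsTopologicalAddGroup Y]
    [ContinuousSMul ℝ Y] [T2Space Y] (π : X →L[ℝ] Y) (A : E →ₗ[ℝ] Y) {Q : Set E}
    (hQ : IsPolyhedron Q) : IsGPCS (π ⁻¹' (A '' Q)) := by
  let W := A.range.comap (π : X →ₗ[ℝ] Y)
  have hW : IsClosed (W : Set X) := A.range.closed_of_finiteDimensional.preimage π.continuous
  let ρ : W →L[ℝ] A.range :=
    ⟨(π : X →ₗ[ℝ] Y).restrict fun _ hx => hx, by fun_prop⟩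
  obtain ⟨ρ', hext⟩ := ρ.exist_extension_of_finiteDimensional_range
  have hG : π ⁻¹' (A '' Q) = (W : Set X) ∩ ρ' ⁻¹' (A.rangeRestrict '' Q) := by
    have hρ' : ∀ x (hx : x ∈ W), (ρ' x : Y) = π x := fun x hx =>
      (congrArg Subtype.val (DFunLike.congr_fun hext ⟨x, hx⟩)).symm
    ext x
    constructor
    · rintro ⟨q, hq, hqx⟩
      have hx : x ∈ W := ⟨q, hqx⟩
      exact ⟨hx, q, hq, Subtype.ext ((hρ' x hx).trans hqx.symm).symm⟩
    · rintro ⟨hx, q, hq, hqx⟩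
      exact ⟨q, hq, (congrArg Subtype.val hqx).trans (hρ' x hx)⟩
  rw [hG]
  exact isGPCS_inter_preimage hW ρ' (hQ.image _)

theorem IsPolyhedronImageAddSubmodule.isGPCS_closure {C : Set X}
    (hC : IsPolyhedronImageAddSubmodule C) : IsGPCS (closure C) := by
  obtain ⟨n, S, Q, K, hQ, rfl⟩ := hC
  let L := K.topologicalClosure
  have : IsClosed (L : Set X) := K.isClosed_topologicalClosure
  have hG := isGPCS_preimage_image L.mkQL (L.mkQ ∘ₗ S) hQ
  have hmem : ∀ x, x ∈ L.mkQL ⁻¹' ((L.mkQ ∘ₗ S) '' Q) ↔ ∃ q ∈ Q, x - S q ∈ L := by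
    intro x
    simp only [mem_preimage, mem_image, LinearMap.comp_apply, Submodule.mkQL_apply,
      Submodule.mkQ_apply, Submodule.Quotient.eq]
    exact exists_congr fun _ => and_congr_right' sub_mem_comm_iff
  have hsub : S '' Q + (K : Set X) ⊆ L.mkQL ⁻¹' ((L.mkQ ∘ₗ S) '' Q) := by
    rintro _ ⟨_, ⟨q, hq, rfl⟩, k, hk, rfl⟩
    exact (hmem _).2 ⟨q, hq, by simpa using K.le_topologicalClosure hk⟩
  have hsub' : L.mkQL ⁻¹' ((L.mkQ ∘ₗ S) '' Q) ⊆ closure (S '' Q + (K : Set X)) := by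
    intro x hx
    obtain ⟨q, hq, hxq⟩ := (hmem x).1 hx
    rw [← SetLike.mem_coe, Submodule.topologicalClosure_coe] at hxq
    simpa using map_mem_closure (continuous_const_add (S q)) hxq
      fun k hk => add_mem_add (mem_image_of_mem S hq) hk
  rwa [subset_antisymm (closure_minimal hsub hG.isClosed) hsub']

end Topology

theorem closure_sum_isGPCS_general {X : Type*} [AddCommGroup X] [Module ℝ X] [TopologicalSpace X]
    [IsTopologicalAddGroup X] [ContinuousSMul ℝ X] [LocallyConvexSpace ℝ X]
    (m : ℕ) (D : Fin m → Set X) (hD : ∀ i, IsGPCS (D i)) :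
    IsGPCS (closure (∑ i, D i)) :=
  IsPolyhedronImageAddSubmodule.isGPCS_closure <|
    Finset.sum_induction D IsPolyhedronImageAddSubmodule
      (fun _ _ => IsPolyhedronImageAddSubmodule.add) IsPolyhedronImageAddSubmodule.zero
      fun i _ => (hD i).isPolyhedronImageAddSubmodule

/-- The closure of the Minkowski sum of finitely many nonempty generalized
polyhedral convex sets is a generalized polyhedral convex set. -/
theorem closure_sum_isGPCS {X : Type*} [AddCommGroup X] [Module ℝ X] [TopologicalSpace X]
    [IsTopologicalAddGroup X] [ContinuousSMul ℝ X] [LocallyConvexSpace ℝ X] [T2Space X]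
    (m : ℕ) (D : Fin m → Set X) (hD : ∀ i, IsGPCS (D i)) (hne : ∀ i, (D i).Nonempty) :
    IsGPCS (closure (∑ i, D i)) :=
  closure_sum_isGPCS_general m D hD
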